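/- Let (f_k)_{k∈ℕ} be a frame sequence in H with synthesis operator T and frame operator S = T T*, and let S† be the Moore-Penrose pseudoinverse of S. Let f ∈ range(T) and set c₀ := (⟨f, S†f_k⟩)_k ∈ ℓ²(ℕ). Then T c₀ = f, and for every c ∈ ℓ²(ℕ) with Tc = f one has ‖c‖² = ‖c₀‖² + ‖c − c₀‖²; in particular c₀ has minimal norm among all c ∈ ℓ²(ℕ) with Tc = f. -/

import Mathlib

/- Setting: `H` is a complex Hilbert space, `ℓ2` is the Hilbert space of square-summable
complex sequences with standard orthonormal basis `lp.single 2 k 1`. -/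

noncomputable section

abbrev ℓ2 : Type := lp (fun _ : ℕ => ℂ) 2

variable {H : Type} [NormedAddCommGroup H] [InnerProductSpace ℂ H] [CompleteSpace H]

/-- The closed linear span `V` of the set of values of the sequence `f`. -/
def spanClosure (f : ℕ → H) : Submodule ℂ H :=
  (Submodule.span ℂ (Set.range f)).topologicalClosure

instance (f : ℕ → H) : CompleteSpace (spanClosure f) :=
  Submodule.topologicalClosure.completeSpace _

/-- `f` is a frame sequence with frame bounds `A`, `B`:  the frame inequality
`A‖g‖² ≤ ∑ₖ |⟨g, fₖ⟩|² ≤ B‖g‖²` holds for every `g` in the closed linear span `V` of the `fₖ`.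
(In Mathlib's convention, the paper's `⟨g, fₖ⟩`, linear in the first argument, is `⟪fₖ, g⟫`.) -/
def IsFrameSeqWith (f : ℕ → H) (A B : ℝ) : Prop :=
  0 < A ∧ 0 < B ∧
    ∀ g ∈ spanClosure f,
      Summable (fun k => ‖(inner ℂ (f k) g : ℂ)‖ ^ 2) ∧
      A * ‖g‖ ^ 2 ≤ ∑' k, ‖(inner ℂ (f k) g : ℂ)‖ ^ 2 ∧
      (∑' k, ‖(inner ℂ (f k) g : ℂ)‖ ^ 2) ≤ B * ‖g‖ ^ 2

/-- `Ad` is the Moore–Penrose pseudoinverse of the bounded operator `A`: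
`A A† A = A`, `A† A A† = A†`, `(A A†)* = A A†` and `(A† A)* = A† A`. -/
def IsMoorePenrose {E F : Type} [NormedAddCommGroup E] [InnerProductSpace ℂ E] [CompleteSpace E]
    [NormedAddCommGroup F] [InnerProductSpace ℂ F] [CompleteSpace F]
    (A : E →L[ℂ] F) (Ad : F →L[ℂ] E) : Prop :=
  A ∘L Ad ∘L A = A ∧ Ad ∘L A ∘L Ad = Ad ∧
  ContinuousLinearMap.adjoint (A ∘L Ad) = A ∘L Ad ∧
  ContinuousLinearMap.adjoint (Ad ∘L A) = Ad ∘L A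

/- Writing `g = T d`, one has `c₀ = T* (S†)* g`, so `T c₀ = S (S†)* g = S† S g` since `S` and
`S† S` are self-adjoint. The projection `S† S` fixes `(ker S)ᗮ = (ker T*)ᗮ ⊇ range T`, hence
`T c₀ = g`. Finally `c₀ ∈ range T*` is orthogonal to `c - c₀ ∈ ker T`. -/

open ContinuousLinearMap
open scoped InnerProduct

section Synthesis

variable {ι 𝕜 E : Type*} [RCLike 𝕜]

theorem apply_single_of_hasSum [NormedAddCommGroup E] [NormedSpace 𝕜 E] [DecidableEq ι]
    {f : ι → E} {T : lp (fun _ : ι => 𝕜) 2 →L[𝕜] E}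
    (hT : ∀ c, HasSum (fun k => c k • f k) (T c)) (k : ι) :
    T (lp.single 2 k 1) = f k := by
  refine (hT _).unique ?_
  convert hasSum_ite_eq k (f k) using 2 with j
  by_cases hjk : j = k <;> simp [lp.single_apply, hjk]

theorem adjoint_apply_of_hasSum [NormedAddCommGroup E] [InnerProductSpace 𝕜 E] [CompleteSpace E]
    {f : ι → E} {T : lp (fun _ : ι => 𝕜) 2 →L[𝕜] E}
    (hT : ∀ c, HasSum (fun k => c k • f k) (T c)) (v : E) (k : ι) :
    ((T†) v) k = inner 𝕜 (f k) v := by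
  classical
  rw [← apply_single_of_hasSum hT k, ← adjoint_inner_right, lp.inner_single_left,
    RCLike.inner_apply, map_one, mul_one]

end Synthesis

namespace ContinuousLinearMap

variable {𝕜 E F : Type*} [RCLike 𝕜] [NormedAddCommGroup E] [InnerProductSpace 𝕜 E]
  [CompleteSpace E] [NormedAddCommGroup F] [InnerProductSpace 𝕜 F] [CompleteSpace F]

theorem range_le_orthogonal_ker_comp_adjoint (T : E →L[𝕜] F) :
    T.range ≤ (T ∘L T†).kerᗮ := by
  rw [ker_self_comp_adjoint, ← orthogonal_range]
  exact Submodule.le_orthogonal_orthogonal _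

theorem adjoint_self_comp_adjoint (T : E →L[𝕜] F) : (T ∘L T†)† = T ∘L T† := by
  rw [adjoint_comp, adjoint_adjoint]

theorem norm_sq_eq_norm_sq_adjoint_add_norm_sq_sub (T : E →L[𝕜] F) (y : F) {c : E}
    (hc : T c = T ((T†) y)) : ‖c‖ ^ 2 = ‖(T†) y‖ ^ 2 + ‖c - (T†) y‖ ^ 2 := by
  have horth : inner 𝕜 ((T†) y) (c - (T†) y) = 0 := by
    rw [adjoint_inner_left, map_sub, hc, sub_self, inner_zero_right]
  simpa only [sq, add_sub_cancel] using
    norm_add_sq_eq_norm_sq_add_norm_sq_of_inner_eq_zero _ _ horth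

end ContinuousLinearMap

namespace IsMoorePenrose

variable {E F : Type} [NormedAddCommGroup E] [InnerProductSpace ℂ E] [CompleteSpace E]
  [NormedAddCommGroup F] [InnerProductSpace ℂ F] [CompleteSpace F]
  {A : E →L[ℂ] F} {Ad : F →L[ℂ] E}

theorem apply_apply_mem_orthogonal_ker (h : IsMoorePenrose A Ad) (w : E) :
    Ad (A w) ∈ A.kerᗮ := by
  intro u hu
  rw [← comp_apply, ← h.2.2.2, adjoint_inner_right, comp_apply, show A u = 0 from hu,
    map_zero, inner_zero_left]

theorem apply_apply_of_mem_orthogonal_ker (h : IsMoorePenrose A Ad) {w : E} (hw : w ∈ A.kerᗮ) :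
    Ad (A w) = w := by
  have hker : Ad (A w) - w ∈ A.ker := by
    simpa [sub_eq_zero] using congrArg (· w) h.1
  have horth : Ad (A w) - w ∈ A.kerᗮ := sub_mem (h.apply_apply_mem_orthogonal_ker w) hw
  exact sub_eq_zero.mp (Submodule.disjoint_def.mp A.ker.orthogonal_disjoint _ hker horth)

theorem comp_adjoint_eq {A Ad : E →L[ℂ] E} (h : IsMoorePenrose A Ad) (hA : A† = A) :
    A ∘L (Ad†) = Ad ∘L A := by
  rw [← h.2.2.2, adjoint_comp, hA]

end IsMoorePenrose

theorem stmt14_general (f : ℕ → H)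
    (T : ℓ2 →L[ℂ] H) (hT : ∀ c : ℓ2, HasSum (fun k => c k • f k) (T c))
    (S : H →L[ℂ] H) (hS : S = T ∘L ContinuousLinearMap.adjoint T)
    (Sdag : H →L[ℂ] H) (hSdag : IsMoorePenrose S Sdag)
    (g : H) (hg : g ∈ Set.range T)
    (c₀ : ℓ2) (hc₀ : ∀ k : ℕ, c₀ k = (inner ℂ (Sdag (f k)) g : ℂ)) :
    T c₀ = g ∧
      (∀ c : ℓ2, T c = g → ‖c‖ ^ 2 = ‖c₀‖ ^ 2 + ‖c - c₀‖ ^ 2) ∧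
      ∀ c : ℓ2, T c = g → ‖c₀‖ ≤ ‖c‖ := by
  subst hS
  obtain ⟨d, rfl⟩ := hg
  have hc₀_eq : c₀ = (T†) ((Sdag†) (T d)) := lp.ext <| funext fun k => by
    rw [hc₀ k, adjoint_apply_of_hasSum hT, adjoint_inner_right]
  have hTc₀ : T c₀ = T d := by
    calc T c₀ = (T ∘L T†) ((Sdag†) (T d)) := by rw [hc₀_eq, comp_apply]
      _ = Sdag ((T ∘L T†) (T d)) := by
        rw [← comp_apply, hSdag.comp_adjoint_eq (adjoint_self_comp_adjoint T), comp_apply]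
      _ = T d := hSdag.apply_apply_of_mem_orthogonal_ker
        (range_le_orthogonal_ker_comp_adjoint T ⟨d, rfl⟩)
  have hpyth : ∀ c : ℓ2, T c = T d → ‖c‖ ^ 2 = ‖c₀‖ ^ 2 + ‖c - c₀‖ ^ 2 := fun c hc => by
    rw [hc₀_eq] at hTc₀ ⊢
    exact norm_sq_eq_norm_sq_adjoint_add_norm_sq_sub T _ (hc.trans hTc₀.symm)
  refine ⟨hTc₀, hpyth, fun c hc => le_of_sq_le_sq ?_ (norm_nonneg c)⟩
  rw [hpyth c hc]
  exact le_add_of_nonneg_right (sq_nonneg _)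

/-- for a frame sequence with synthesis operator `T`, frame operator
`S = T T*` and `S†` the Moore-Penrose pseudoinverse of `S`: for `g ∈ range T` and
`c₀ := (⟨g, S†fₖ⟩)ₖ ∈ ℓ²` one has `T c₀ = g`, and every `c ∈ ℓ²` with `Tc = g` satisfies
`‖c‖² = ‖c₀‖² + ‖c - c₀‖²`; in particular `c₀` has minimal norm among such `c`. -/
theorem stmt14 (f : ℕ → H) (A B : ℝ) (hF : IsFrameSeqWith f A B)
    (T : ℓ2 →L[ℂ] H) (hT : ∀ c : ℓ2, HasSum (fun k => c k • f k) (T c))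
    (S : H →L[ℂ] H) (hS : S = T ∘L ContinuousLinearMap.adjoint T)
    (Sdag : H →L[ℂ] H) (hSdag : IsMoorePenrose S Sdag)
    (g : H) (hg : g ∈ Set.range T)
    (c₀ : ℓ2) (hc₀ : ∀ k : ℕ, c₀ k = (inner ℂ (Sdag (f k)) g : ℂ)) :
    T c₀ = g ∧
      (∀ c : ℓ2, T c = g → ‖c‖ ^ 2 = ‖c₀‖ ^ 2 + ‖c - c₀‖ ^ 2) ∧
      ∀ c : ℓ2, T c = g → ‖c₀‖ ≤ ‖c‖ :=
  stmt14_general f T hT S hS Sdag hSdag g hg c₀ hc₀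

end
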